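/- Let P be a hole-free polyomino (a polyomino whose complement in ℤ² has exactly one connected component under 4-adjacency). Partition P into maximal axis-parallel rectangles by extending horizontal cuts through all reflex vertices. Then the adjacency graph of the resulting rectangles (two rectangles adjacent if they share a positive-length horizontal boundary segment) is a tree. -/

import Mathlib

/-!
Every pixel of `P` lies in exactly one slab piece, and 4-adjacent pixels lie in equal or
adjacent pieces, so the slab graph is connected because `P` is.

Suppose the slab graph has a cycle, and let `R₀` be a piece on it whose bottom row is as high as
possible. Both cycle neighbours of `R₀` then end directly below it, as two distinct maximal runs
of that row, so some pixel `g ∉ P` lies between them, under `R₀`. Following the cycle gives a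
closed lattice walk in `P` which meets the upward ray from `g` only inside `R₀`, where it crosses
it exactly once. But the signed number of crossings does not change when `g` moves along a path
avoiding the walk and vanishes far to the right of `P`; as `Pᶜ` is 4-connected, it is zero.
-/

/-- Pixels are points of `ℤ²`. -/
abbrev Pix : Type := ℤ × ℤ

/-- Two pixels are 4-adjacent if they differ by exactly 1 in one coordinate. -/
def Adj4 (p q : Pix) : Prop := (p.1 - q.1).natAbs + (p.2 - q.2).natAbs = 1

/-- A set of pixels is 4-connected if it is nonempty and any two of its pixels
are joined by a path of 4-adjacent pixels staying inside the set. -/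
def Connected4 (S : Set Pix) : Prop :=
  S.Nonempty ∧ ∀ p ∈ S, ∀ q ∈ S,
    Relation.ReflTransGen (fun a b => a ∈ S ∧ b ∈ S ∧ Adj4 a b) p q

/-- The scale-`c` copy of a pixel set: each pixel `(x, y)` is replaced by the
`c × c` block `{(c*x+i, c*y+j) : 0 ≤ i, j < c}`. -/
def scaleP (c : ℤ) (P : Set Pix) : Set Pix :=
  {q | ∃ p ∈ P, ∃ i j : ℤ, 0 ≤ i ∧ i < c ∧ 0 ≤ j ∧ j < c ∧
    q = (c * p.1 + i, c * p.2 + j)}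

/-- A pixel `p ∈ P` is a boundary pixel of `P` if one of its eight
(axis-parallel or diagonal) neighbors is not in `P`. -/
def IsBoundary (P : Set Pix) (p : Pix) : Prop :=
  p ∈ P ∧ ∃ d : Pix, d ≠ (0, 0) ∧ d.1.natAbs ≤ 1 ∧ d.2.natAbs ≤ 1 ∧
    (p.1 + d.1, p.2 + d.2) ∉ P

/-- `IsHRun P y a b`: the pixels `(x, y)` for `a ≤ x ≤ b` form a maximal
horizontal run of `P` in row `y`. -/
def IsHRun (P : Set Pix) (y a b : ℤ) : Prop :=
  a ≤ b ∧ (∀ x : ℤ, a ≤ x → x ≤ b → (x, y) ∈ P) ∧ (a - 1, y) ∉ P ∧ (b + 1, y) ∉ P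

/-- A rectangle `[a,b] × [c,d]` of the horizontal slab decomposition of `P`
(cutting along every horizontal line through a reflex vertex): every row
`c ≤ y ≤ d` has `[a,b]` as a maximal horizontal run, and this is vertically
maximal. -/
structure SlabPiece (P : Set Pix) where
  a : ℤ
  b : ℤ
  c : ℤ
  d : ℤ
  hcd : c ≤ d
  hrows : ∀ y : ℤ, c ≤ y → y ≤ d → IsHRun P y a b
  htop : ¬ IsHRun P (d + 1) a b
  hbot : ¬ IsHRun P (c - 1) a b

/-- Two slab pieces are adjacent when they share a positive-length horizontal
boundary segment. -/
def SlabAdj {P : Set Pix} (R R' : SlabPiece P) : Prop :=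
  (R.d + 1 = R'.c ∨ R'.d + 1 = R.c) ∧ max R.a R'.a ≤ min R.b R'.b

open SimpleGraph

theorem SimpleGraph.Walk.sum_map_darts_eq_add_sub {V M : Type*} [AddCommGroup M]
    {G : SimpleGraph V} (f g : G.Dart → M) (h : V → M) {u v : V} (w : G.Walk u v)
    (hfg : ∀ d ∈ w.darts, f d = g d + (h d.snd - h d.fst)) :
    (w.darts.map f).sum = (w.darts.map g).sum + (h v - h u) := by
  induction w with
  | nil => simp
  | cons hadj w ih =>
    simp only [darts_cons, List.mem_cons, forall_eq_or_imp] at hfg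
    simp only [darts_cons, List.map_cons, List.sum_cons, hfg.1, ih hfg.2]
    abel

theorem SimpleGraph.Walk.IsCycle.exists_walk_between_neighbors {V : Type*} {G : SimpleGraph V}
    {u : V} {c : G.Walk u u} (hc : c.IsCycle) :
    ∃ v w, G.Adj w u ∧ G.Adj u v ∧ v ≠ w ∧
      ∃ p : G.Walk v w, u ∉ p.support ∧ ∀ x ∈ p.support, x ∈ c.support := by
  cases c with
  | nil => exact absurd hc not_isCycle_nil
  | cons h t =>
    have ht : ¬t.Nil := not_nil_of_isCycle_cons hc
    have hsupp := support_dropLast_concat ht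
    refine ⟨_, t.penultimate, adj_penultimate ht, h, ?_, t.dropLast, fun hu => ?_, fun x hx => ?_⟩
    · simpa [penultimate_cons_of_not_nil _ _ ht] using hc.snd_ne_penultimate
    · have hnodup := ((cons_isCycle_iff t h).1 hc).1.support_nodup
      rw [← hsupp] at hnodup
      exact List.disjoint_of_nodup_append hnodup hu (List.mem_singleton_self u)
    · rw [support_cons, ← hsupp]
      exact List.mem_cons_of_mem _ (List.mem_append_left _ hx)

/-- `IsHRun P y` is `IsMaxInterval (fun x => (x, y) ∈ P)` by definition. -/
def IsMaxInterval (Q : ℤ → Prop) (a b : ℤ) : Prop :=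
  a ≤ b ∧ (∀ x, a ≤ x → x ≤ b → Q x) ∧ ¬Q (a - 1) ∧ ¬Q (b + 1)

namespace IsMaxInterval

variable {Q : ℤ → Prop}

theorem eq_of_mem {a b a' b' x : ℤ} (h : IsMaxInterval Q a b) (h' : IsMaxInterval Q a' b')
    (hx : a ≤ x ∧ x ≤ b) (hx' : a' ≤ x ∧ x ≤ b') : a = a' ∧ b = b' := by
  obtain ⟨-, hQ, ha, hb⟩ := h
  obtain ⟨-, hQ', ha', hb'⟩ := h'
  have : ¬a < a' := fun hlt => ha' (hQ _ (by omega) (by omega))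
  have : ¬a' < a := fun hlt => ha (hQ' _ (by omega) (by omega))
  have : ¬b < b' := fun hlt => hb (hQ' _ (by omega) (by omega))
  have : ¬b' < b := fun hlt => hb' (hQ _ (by omega) (by omega))
  omega

theorem exists_of_finite (hfin : {x | Q x}.Finite) {x₀ : ℤ} (hx₀ : Q x₀) :
    ∃ a b, IsMaxInterval Q a b ∧ a ≤ x₀ ∧ x₀ ≤ b := by
  obtain ⟨lo, hlo⟩ := hfin.bddBelow
  obtain ⟨hi, hhi⟩ := hfin.bddAbove
  obtain ⟨a, ⟨hax₀, ha⟩, hamin⟩ := Int.exists_least_of_bdd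
    (P := fun a => a ≤ x₀ ∧ ∀ x, a ≤ x → x ≤ x₀ → Q x)
    ⟨lo, fun a h => hlo (h.2 a le_rfl h.1)⟩ ⟨x₀, le_rfl, fun x h h' => le_antisymm h' h ▸ hx₀⟩
  obtain ⟨b, ⟨hx₀b, hb⟩, hbmax⟩ := Int.exists_greatest_of_bdd
    (P := fun b => x₀ ≤ b ∧ ∀ x, x₀ ≤ x → x ≤ b → Q x)
    ⟨hi, fun b h => hhi (h.2 b h.1 le_rfl)⟩ ⟨x₀, le_rfl, fun x h h' => le_antisymm h' h ▸ hx₀⟩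
  refine ⟨a, b, ⟨by omega, fun x h h' => ?_, fun hQ => ?_, fun hQ => ?_⟩, hax₀, hx₀b⟩
  · rcases le_total x x₀ with hx | hx
    · exact ha x h hx
    · exact hb x hx h'
  · have := hamin (a - 1) ⟨by omega, fun x h h' => ?_⟩
    · omega
    · rcases eq_or_lt_of_le h with rfl | hlt
      · exact hQ
      · exact ha x (by omega) h'
  · have := hbmax (b + 1) ⟨by omega, fun x h h' => ?_⟩
    · omega
    · rcases eq_or_lt_of_le h' with rfl | hlt
      · exact hQ
      · exact hb x h (by omega)

end IsMaxInterval

namespace SlabPiece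

variable {P : Set Pix}

theorem isMaxInterval (R : SlabPiece P) :
    IsMaxInterval (fun y => IsHRun P y R.a R.b) R.c R.d :=
  ⟨R.hcd, R.hrows, R.hbot, R.htop⟩

def box (R : SlabPiece P) : Set Pix := Set.Icc (R.a, R.c) (R.b, R.d)

@[simp]
theorem mem_box {R : SlabPiece P} {p : Pix} :
    p ∈ R.box ↔ R.a ≤ p.1 ∧ p.1 ≤ R.b ∧ R.c ≤ p.2 ∧ p.2 ≤ R.d := by
  simp only [box, Set.mem_Icc, Prod.le_def]
  tauto

theorem box_subset (R : SlabPiece P) : R.box ⊆ P := fun p hp => by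
  rw [mem_box] at hp
  exact (R.hrows p.2 hp.2.2.1 hp.2.2.2).2.1 p.1 hp.1 hp.2.1

theorem eq_of_mem_box {R R' : SlabPiece P} {p : Pix} (h : p ∈ R.box) (h' : p ∈ R'.box) :
    R = R' := by
  rw [mem_box] at h h'
  obtain ⟨ha, hb⟩ := IsMaxInterval.eq_of_mem (R.hrows p.2 h.2.2.1 h.2.2.2)
    (R'.hrows p.2 h'.2.2.1 h'.2.2.2) ⟨h.1, h.2.1⟩ ⟨h'.1, h'.2.1⟩
  have hrows' := R'.isMaxInterval
  rw [← ha, ← hb] at hrows'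
  obtain ⟨hc, hd⟩ := IsMaxInterval.eq_of_mem R.isMaxInterval hrows'
    ⟨h.2.2.1, h.2.2.2⟩ ⟨h'.2.2.1, h'.2.2.2⟩
  cases R
  cases R'
  simp_all

theorem exists_mem_box (hfin : P.Finite) {p : Pix} (hp : p ∈ P) :
    ∃ R : SlabPiece P, p ∈ R.box := by
  have hrow : {x | (x, p.2) ∈ P}.Finite :=
    hfin.preimage fun x _ y _ h => congrArg Prod.fst h
  obtain ⟨a, b, hab, ha, hb⟩ := IsMaxInterval.exists_of_finite hrow hp
  have hcol : {y | IsHRun P y a b}.Finite :=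
    (hfin.preimage fun x _ y _ h => congrArg Prod.snd h).subset
      fun y hy => hy.2.1 a le_rfl hy.1
  obtain ⟨c, d, ⟨hcd, hrows, hbot, htop⟩, hc, hd⟩ := IsMaxInterval.exists_of_finite hcol hab
  exact ⟨⟨a, b, c, d, hcd, hrows, htop, hbot⟩, mem_box.2 ⟨ha, hb, hc, hd⟩⟩

theorem mem_box_of_adj4 {R : SlabPiece P} {p q : Pix} (hp : p ∈ R.box) (hq : q ∈ P)
    (hpq : Adj4 p q) (hrow : R.c ≤ q.2 ∧ q.2 ≤ R.d) : q ∈ R.box := by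
  obtain ⟨-, -, hleft, hright⟩ := R.hrows q.2 hrow.1 hrow.2
  have : q.1 ≠ R.a - 1 := fun h => hleft (h ▸ hq)
  have : q.1 ≠ R.b + 1 := fun h => hright (h ▸ hq)
  rw [mem_box] at hp ⊢
  unfold Adj4 at hpq
  omega

end SlabPiece

theorem SlabAdj.symm {P : Set Pix} {R R' : SlabPiece P} (h : SlabAdj R R') : SlabAdj R' R :=
  ⟨h.1.symm, by rw [max_comm, min_comm]; exact h.2⟩

abbrev slabGraph (P : Set Pix) : SimpleGraph (SlabPiece P) :=
  fromRel fun R R' : SlabPiece P => SlabAdj R R'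

section SlabGraph

variable {P : Set Pix}

theorem slabGraph_adj {R R' : SlabPiece P} : (slabGraph P).Adj R R' ↔ R ≠ R' ∧ SlabAdj R R' := by
  rw [fromRel_adj, or_iff_left_of_imp SlabAdj.symm]

theorem eq_or_slabGraph_adj_of_adj4 {R R' : SlabPiece P} {p q : Pix} (hp : p ∈ R.box)
    (hq : q ∈ R'.box) (hpq : Adj4 p q) : R = R' ∨ (slabGraph P).Adj R R' := by
  by_cases hq' : R.c ≤ q.2 ∧ q.2 ≤ R.d
  · exact .inl (SlabPiece.eq_of_mem_box (R.mem_box_of_adj4 hp (R'.box_subset hq) hpq hq') hq)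
  by_cases hp' : R'.c ≤ p.2 ∧ p.2 ≤ R'.d
  · have hqp : Adj4 q p := by unfold Adj4 at hpq ⊢; omega
    exact .inl (SlabPiece.eq_of_mem_box hp (R'.mem_box_of_adj4 hq (R.box_subset hp) hqp hp'))
  by_cases hRR' : R = R'
  · exact .inl hRR'
  rw [SlabPiece.mem_box] at hp hq
  unfold Adj4 at hpq
  exact .inr (slabGraph_adj.2 ⟨hRR', by omega, by omega⟩)

theorem slabGraph_connected (hfin : P.Finite) (hconn : Connected4 P) :
    (slabGraph P).Connected := by
  obtain ⟨⟨p₀, hp₀⟩, hpath⟩ := hconn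
  have corner_mem (R : SlabPiece P) : (R.a, R.c) ∈ R.box :=
    SlabPiece.mem_box.2 ⟨le_rfl, (R.hrows R.c le_rfl R.hcd).1, le_rfl, R.hcd⟩
  have hreach {p q : Pix} (hpq : Relation.ReflTransGen (fun a b => a ∈ P ∧ b ∈ P ∧ Adj4 a b) p q)
      {R R' : SlabPiece P} (hp : p ∈ R.box) (hq : q ∈ R'.box) : (slabGraph P).Reachable R R' := by
    induction hpq generalizing R' with
    | refl => rw [SlabPiece.eq_of_mem_box hp hq]
    | tail _ hstep ih =>
      obtain ⟨A, hA⟩ := SlabPiece.exists_mem_box hfin hstep.1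
      rcases eq_or_slabGraph_adj_of_adj4 hA hq hstep.2.2 with rfl | hAR'
      · exact ih hA
      · exact (ih hA).trans hAR'.reachable
  obtain ⟨R₀, -⟩ := SlabPiece.exists_mem_box hfin hp₀
  have : Nonempty (SlabPiece P) := ⟨R₀⟩
  exact ⟨fun R R' => hreach (hpath _ (R.box_subset (corner_mem R)) _
    (R'.box_subset (corner_mem R'))) (corner_mem R) (corner_mem R')⟩

end SlabGraph

def gridGraph : SimpleGraph Pix where
  Adj := Adj4
  symm := ⟨fun p q h => by unfold Adj4 at *; omega⟩
  loopless := ⟨fun p h => by simp [Adj4] at h⟩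

theorem exists_gridWalk_of_adj4_succ (f : ℤ → Pix) (hf : ∀ t, Adj4 (f t) (f (t + 1)))
    (m n : ℤ) : ∃ w : gridGraph.Walk (f m) (f n),
      ∀ x ∈ w.support, ∃ t, (m ≤ t ∧ t ≤ n ∨ n ≤ t ∧ t ≤ m) ∧ x = f t := by
  wlog hmn : m ≤ n generalizing m n
  · obtain ⟨w, hw⟩ := this n m (by omega)
    exact ⟨w.reverse, fun x hx => by
      obtain ⟨t, ht⟩ := hw x (by simpa using hx)
      exact ⟨t, by omega, ht.2⟩⟩
  induction n, hmn using Int.leInduction with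
  | base => exact ⟨.nil, fun x hx => ⟨m, by simp_all⟩⟩
  | succ n hmn ih =>
    obtain ⟨w, hw⟩ := ih
    have hadj : gridGraph.Adj (f n) (f (n + 1)) := hf n
    refine ⟨w.concat hadj, fun x hx => ?_⟩
    rw [Walk.support_concat, List.mem_append, List.mem_singleton] at hx
    rcases hx with hx | rfl
    · obtain ⟨t, ht, rfl⟩ := hw x hx
      exact ⟨t, by omega, rfl⟩
    · exact ⟨n + 1, by omega, rfl⟩

theorem exists_gridWalk_Icc {lo hi p q : Pix} (hp : p ∈ Set.Icc lo hi) (hq : q ∈ Set.Icc lo hi) :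
    ∃ w : gridGraph.Walk p q, ∀ x ∈ w.support, x ∈ Set.Icc lo hi := by
  simp only [Set.mem_Icc, Prod.le_def] at hp hq
  obtain ⟨w₁, hw₁⟩ := exists_gridWalk_of_adj4_succ (fun t => (t, p.2))
    (fun t => by simp [Adj4]) p.1 q.1
  obtain ⟨w₂, hw₂⟩ := exists_gridWalk_of_adj4_succ (fun t => (q.1, t))
    (fun t => by simp [Adj4]) p.2 q.2
  refine ⟨w₁.append w₂, fun x hx => ?_⟩
  simp only [Set.mem_Icc, Prod.le_def]
  rcases (Walk.mem_support_append_iff _ _).1 hx with hx | hx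
  · obtain ⟨t, ht, rfl⟩ := hw₁ x hx
    omega
  · obtain ⟨t, ht, rfl⟩ := hw₂ x hx
    omega

def rightOf (q p : Pix) : ℤ := if q.1 < p.1 then 1 else 0

/-- The signed crossing of the grid step `x → y` with the upward vertical ray issuing from the
top-right corner of the pixel `q`. -/
def rayCrossing (q x y : Pix) : ℤ := if q.2 < x.2 then rightOf q y - rightOf q x else 0

def crossingNumber (q : Pix) {u v : Pix} (w : gridGraph.Walk u v) : ℤ :=
  (w.darts.map fun d => rayCrossing q d.fst d.snd).sum

section CrossingNumber

variable {q : Pix}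

theorem rayCrossing_eq_zero_of_fst_eq {x y : Pix} (h : x.1 = y.1) : rayCrossing q x y = 0 := by
  simp [rayCrossing, rightOf, h]

@[simp]
theorem crossingNumber_nil {u : Pix} : crossingNumber q (.nil : gridGraph.Walk u u) = 0 := rfl

theorem crossingNumber_cons {u v w : Pix} (h : gridGraph.Adj u v) (p : gridGraph.Walk v w) :
    crossingNumber q (.cons h p) = rayCrossing q u v + crossingNumber q p := by
  simp [crossingNumber]

theorem crossingNumber_append {u v w : Pix} (p : gridGraph.Walk u v) (p' : gridGraph.Walk v w) :
    crossingNumber q (p.append p') = crossingNumber q p + crossingNumber q p' := by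
  simp [crossingNumber]

theorem crossingNumber_eq_zero {u v : Pix} {w : gridGraph.Walk u v}
    (h : ∀ d ∈ w.darts, rayCrossing q d.fst d.snd = 0) : crossingNumber q w = 0 :=
  List.sum_eq_zero fun n hn => by
    obtain ⟨d, hd, rfl⟩ := List.mem_map.1 hn
    exact h d hd

theorem crossingNumber_eq_of_forall_lt {u v : Pix} (w : gridGraph.Walk u v)
    (h : ∀ x ∈ w.support, q.2 < x.2) : crossingNumber q w = rightOf q v - rightOf q u := by
  have := w.sum_map_darts_eq_add_sub (fun d => rayCrossing q d.fst d.snd) (fun _ => 0)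
    (rightOf q) fun d hd => by simp [rayCrossing, h _ (w.dart_fst_mem_support_of_mem_darts hd)]
  simpa [crossingNumber] using this

theorem crossingNumber_eq_zero_of_forall_le {u v : Pix} (w : gridGraph.Walk u v)
    (h : ∀ x ∈ w.support, x.1 ≤ q.1) : crossingNumber q w = 0 :=
  crossingNumber_eq_zero fun d hd => by
    have h₁ := h _ (w.dart_fst_mem_support_of_mem_darts hd)
    have h₂ := h _ (w.dart_snd_mem_support_of_mem_darts hd)
    simp only [rayCrossing, rightOf]
    split_ifs <;> omega

/-- Moving `q` to a neighbour changes each crossing of a step avoiding both pixels by a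
difference of a potential, so the crossing number of a closed walk is unchanged. -/
theorem crossingNumber_eq_of_adj4 {u : Pix} (w : gridGraph.Walk u u) {q' : Pix}
    (hqq' : Adj4 q q') (hq : q ∉ w.support) (hq' : q' ∉ w.support) :
    crossingNumber q w = crossingNumber q' w := by
  have key (r r' : Pix) (hrr' : r'.1 = r.1 + 1 ∧ r'.2 = r.2 ∨ r'.1 = r.1 ∧ r'.2 = r.2 + 1)
      (hr' : r' ∉ w.support) : crossingNumber r w = crossingNumber r' w := by
    have := w.sum_map_darts_eq_add_sub (fun d => rayCrossing r d.fst d.snd)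
      (fun d => rayCrossing r' d.fst d.snd)
      (fun p => if r.2 < p.2 ∧ p.1 = r'.1 ∧ r'.2 = r.2 then 1 else 0) fun d hd => by
        have hadj : Adj4 d.fst d.snd := d.adj
        have h₁ : d.fst ≠ r' := fun h => hr' (h ▸ w.dart_fst_mem_support_of_mem_darts hd)
        have h₂ : d.snd ≠ r' := fun h => hr' (h ▸ w.dart_snd_mem_support_of_mem_darts hd)
        rw [Ne, Prod.ext_iff] at h₁ h₂
        unfold Adj4 at hadj
        simp only [rayCrossing, rightOf]
        split_ifs <;> omega
    simpa [crossingNumber] using this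
  unfold Adj4 at hqq'
  rcases (by omega : q'.1 = q.1 + 1 ∧ q'.2 = q.2 ∨ q'.1 = q.1 ∧ q'.2 = q.2 + 1 ∨
      q.1 = q'.1 + 1 ∧ q.2 = q'.2 ∨ q.1 = q'.1 ∧ q.2 = q'.2 + 1) with h | h | h | h
  · exact key q q' (.inl h) hq'
  · exact key q q' (.inr h) hq'
  · exact (key q' q (.inl h) hq).symm
  · exact (key q' q (.inr h) hq).symm

theorem crossingNumber_eq_zero_of_connected4_compl {P : Set Pix} (hfin : P.Finite)
    (hholefree : Connected4 Pᶜ) {u : Pix} (w : gridGraph.Walk u u) (hw : ∀ x ∈ w.support, x ∈ P)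
    (hq : q ∉ P) : crossingNumber q w = 0 := by
  obtain ⟨M, hM⟩ := hfin.bddAbove
  have hfar : (M.1 + 1, q.2) ∉ P := fun h => by have := (hM h).1; simp at this
  have hinvariant {r : Pix}
      (hqr : Relation.ReflTransGen (fun a b => a ∈ Pᶜ ∧ b ∈ Pᶜ ∧ Adj4 a b) q r) :
      crossingNumber q w = crossingNumber r w := by
    induction hqr with
    | refl => rfl
    | tail _ hstep ih =>
      exact ih.trans (crossingNumber_eq_of_adj4 w hstep.2.2
        (fun h => hstep.1 (hw _ h)) (fun h => hstep.2.1 (hw _ h)))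
  rw [hinvariant (hholefree.2 q hq _ hfar)]
  exact crossingNumber_eq_zero_of_forall_le w fun x hx => by
    have := (hM (hw x hx)).1
    simp only at this ⊢
    omega

end CrossingNumber

section SlabGraph

variable {P : Set Pix}

theorem SlabPiece.exists_gridWalk (R : SlabPiece P) {p q : Pix} (hp : p ∈ R.box)
    (hq : q ∈ R.box) : ∃ w : gridGraph.Walk p q, ∀ x ∈ w.support, x ∈ R.box :=
  exists_gridWalk_Icc hp hq

theorem exists_adj4_of_slabGraph_adj {A B : SlabPiece P} (h : (slabGraph P).Adj A B) :
    ∃ e ∈ A.box, ∃ e' ∈ B.box, e.1 = e'.1 ∧ Adj4 e e' := by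
  obtain ⟨-, hdir, hover⟩ := slabGraph_adj.1 h
  have hA := A.hcd
  have hB := B.hcd
  rcases hdir with hdir | hdir
  · exact ⟨(max A.a B.a, A.d), by simp; omega, (max A.a B.a, B.c), by simp; omega, rfl,
      by simp [Adj4]; omega⟩
  · exact ⟨(max A.a B.a, A.c), by simp; omega, (max A.a B.a, B.d), by simp; omega, rfl,
      by simp [Adj4]; omega⟩

theorem exists_gridWalk_of_walk {A B : SlabPiece P} (w : (slabGraph P).Walk A B) {p q : Pix}
    (hp : p ∈ A.box) (hq : q ∈ B.box) :
    ∃ v : gridGraph.Walk p q, (∀ x ∈ v.support, ∃ C ∈ w.support, x ∈ C.box) ∧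
      ∀ d ∈ v.darts, d.fst.1 = d.snd.1 ∨ ∃ C ∈ w.support, d.fst ∈ C.box ∧ d.snd ∈ C.box := by
  induction w generalizing p with
  | nil =>
    obtain ⟨v, hv⟩ := SlabPiece.exists_gridWalk _ hp hq
    exact ⟨v, fun x hx => ⟨_, by simp, hv x hx⟩, fun d hd => .inr ⟨_, by simp,
      hv _ (v.dart_fst_mem_support_of_mem_darts hd), hv _ (v.dart_snd_mem_support_of_mem_darts hd)⟩⟩
  | @cons A A' B hAA' w ih =>
    obtain ⟨e, he, e', he', hvert, hee'⟩ := exists_adj4_of_slabGraph_adj hAA'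
    obtain ⟨v₁, hv₁⟩ := A.exists_gridWalk hp he
    obtain ⟨v₂, hv₂, hd₂⟩ := ih he' hq
    refine ⟨v₁.append (.cons (show gridGraph.Adj e e' from hee') v₂), fun x hx => ?_,
      fun d hd => ?_⟩
    · rcases (Walk.mem_support_append_iff _ _).1 hx with hx | hx
      · exact ⟨A, by simp, hv₁ x hx⟩
      · rw [Walk.support_cons, List.mem_cons] at hx
        rcases hx with hx | hx
        · exact ⟨A, by simp, hx ▸ he⟩
        · obtain ⟨C, hC, hxC⟩ := hv₂ x hx
          exact ⟨C, by simp [hC], hxC⟩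
    · rw [Walk.darts_append, Walk.darts_cons, List.mem_append, List.mem_cons] at hd
      rcases hd with hd | rfl | hd
      · exact .inr ⟨A, by simp, hv₁ _ (v₁.dart_fst_mem_support_of_mem_darts hd),
          hv₁ _ (v₁.dart_snd_mem_support_of_mem_darts hd)⟩
      · exact .inl hvert
      · rcases hd₂ d hd with h | ⟨C, hC, hC'⟩
        · exact .inl h
        · exact .inr ⟨C, by simp [hC], hC'⟩

/-- The ray above `g` meets row `R₀.c` inside `R₀`, so a piece starting no higher than `R₀`
cannot also contain a crossing of it. -/
theorem rayCrossing_eq_zero_of_mem_box {R₀ C : SlabPiece P} (hC : C ≠ R₀) (hCc : C.c ≤ R₀.c)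
    {g : Pix} (hg : R₀.a ≤ g.1 ∧ g.1 ≤ R₀.b) (hgc : g.2 + 1 = R₀.c) {x y : Pix}
    (hx : x ∈ C.box) (hy : y ∈ C.box) : rayCrossing g x y = 0 := by
  have hR₀ : (g.1, R₀.c) ∈ R₀.box := by simp [hg, R₀.hcd]
  simp only [SlabPiece.mem_box] at hx hy
  unfold rayCrossing rightOf
  split_ifs <;> try rfl
  all_goals
    exact absurd (SlabPiece.eq_of_mem_box (p := (g.1, R₀.c)) (by simp; omega) hR₀) hC

theorem SlabPiece.d_add_one_eq_of_adj {R S : SlabPiece P} (h : (slabGraph P).Adj R S)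
    (hc : S.c ≤ R.c) : S.d + 1 = R.c ∧ max R.a S.a ≤ min R.b S.b := by
  obtain ⟨-, hdir, hover⟩ := slabGraph_adj.1 h
  have := R.hcd
  exact ⟨by omega, hover⟩

theorem exists_not_mem_between {S₁ S₂ : SlabPiece P} (hne : S₁ ≠ S₂) (hd : S₁.d = S₂.d) :
    ∃ g ∉ P, g.2 = S₁.d ∧ (S₁.b < g.1 ∧ g.1 < S₂.a ∨ S₂.b < g.1 ∧ g.1 < S₁.a) := by
  have gap {S S' : SlabPiece P} (hd : S.d = S'.d) (hlt : S.b < S'.a) :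
      (S.b + 1, S.d) ∉ P ∧ S.b + 1 < S'.a := by
    have hS := S.hrows S.d S.hcd le_rfl
    have hS' := S'.hrows S'.d S'.hcd le_rfl
    refine ⟨hS.2.2.2, lt_of_le_of_ne hlt fun h => hS.2.2.2 ?_⟩
    rw [h, hd]
    exact hS'.2.1 _ le_rfl hS'.1
  have hsep : S₁.b < S₂.a ∨ S₂.b < S₁.a := by
    by_contra! h
    have := S₁.hcd
    have := S₂.hcd
    have := (S₁.hrows S₁.d S₁.hcd le_rfl).1
    have := (S₂.hrows S₂.d S₂.hcd le_rfl).1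
    exact hne (SlabPiece.eq_of_mem_box (p := (max S₁.a S₂.a, S₁.d))
      (by simp; omega) (by simp; omega))
  rcases hsep with hlt | hlt
  · obtain ⟨hg, hg'⟩ := gap hd hlt
    exact ⟨_, hg, rfl, .inl ⟨by simp, hg'⟩⟩
  · obtain ⟨hg, hg'⟩ := gap hd.symm hlt
    exact ⟨_, hg, hd.symm, .inr ⟨by simp, hg'⟩⟩

/-- The closed walk that runs through `R₀` from `β` to `α`, down into `S₂`, along the slab walk `m`
and back up from `S₁` crosses the ray above `g` only inside `R₀`. -/
theorem exists_closed_gridWalk_crossingNumber_eq {R₀ S₁ S₂ : SlabPiece P}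
    (m : (slabGraph P).Walk S₂ S₁) (hm : ∀ A ∈ m.support, A ≠ R₀ ∧ A.c ≤ R₀.c) {g : Pix}
    (hg : R₀.a ≤ g.1 ∧ g.1 ≤ R₀.b) (hgc : g.2 + 1 = R₀.c) {α β : ℤ}
    (hα : (α, R₀.c) ∈ R₀.box ∧ (α, R₀.c - 1) ∈ S₂.box)
    (hβ : (β, R₀.c) ∈ R₀.box ∧ (β, R₀.c - 1) ∈ S₁.box) :
    ∃ ℓ : gridGraph.Walk (β, R₀.c) (β, R₀.c), (∀ x ∈ ℓ.support, x ∈ P) ∧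
      crossingNumber g ℓ = rightOf g (α, R₀.c) - rightOf g (β, R₀.c) := by
  obtain ⟨v₀, hv₀⟩ := R₀.exists_gridWalk hβ.1 hα.1
  obtain ⟨v₁, hv₁, hd₁⟩ := exists_gridWalk_of_walk m hα.2 hβ.2
  have hdown : gridGraph.Adj (α, R₀.c) (α, R₀.c - 1) := by simp [gridGraph, Adj4]
  have hup : gridGraph.Adj (β, R₀.c - 1) (β, R₀.c) := by simp [gridGraph, Adj4]
  refine ⟨v₀.append (.cons hdown (v₁.append (.cons hup .nil))), fun x hx => ?_, ?_⟩
  · simp only [Walk.mem_support_append_iff, Walk.support_cons, Walk.support_nil,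
      List.mem_cons, List.not_mem_nil, or_false] at hx
    rcases hx with hx | rfl | hx | rfl | rfl
    · exact R₀.box_subset (hv₀ x hx)
    · exact R₀.box_subset hα.1
    · obtain ⟨C, -, hxC⟩ := hv₁ x hx
      exact C.box_subset hxC
    · exact S₁.box_subset hβ.2
    · exact R₀.box_subset hβ.1
  have hcross₀ := crossingNumber_eq_of_forall_lt (q := g) v₀ fun x hx => by
    have := SlabPiece.mem_box.1 (hv₀ x hx)
    omega
  have hcross₁ : crossingNumber g v₁ = 0 := crossingNumber_eq_zero fun d hd => by
    rcases hd₁ d hd with h | ⟨C, hC, hxC, hyC⟩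
    · exact rayCrossing_eq_zero_of_fst_eq h
    · exact rayCrossing_eq_zero_of_mem_box (hm C hC).1 (hm C hC).2 hg hgc hxC hyC
  rw [crossingNumber_append, crossingNumber_cons, crossingNumber_append, crossingNumber_cons,
    hcross₀, hcross₁, crossingNumber_nil,
    rayCrossing_eq_zero_of_fst_eq (x := (α, R₀.c)) (y := (α, R₀.c - 1)) rfl,
    rayCrossing_eq_zero_of_fst_eq (x := (β, R₀.c - 1)) (y := (β, R₀.c)) rfl]
  ring

theorem exists_crossingNumber_ne_zero {R₀ S₁ S₂ : SlabPiece P} (h₁ : (slabGraph P).Adj S₁ R₀)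
    (h₂ : (slabGraph P).Adj R₀ S₂) (hne : S₁ ≠ S₂) (m : (slabGraph P).Walk S₂ S₁)
    (hm : ∀ A ∈ m.support, A ≠ R₀ ∧ A.c ≤ R₀.c) :
    ∃ g ∉ P, ∃ (u : Pix) (ℓ : gridGraph.Walk u u),
      (∀ x ∈ ℓ.support, x ∈ P) ∧ crossingNumber g ℓ ≠ 0 := by
  obtain ⟨hS₁d, hS₁⟩ := SlabPiece.d_add_one_eq_of_adj h₁.symm (hm S₁ m.end_mem_support).2
  obtain ⟨hS₂d, hS₂⟩ := SlabPiece.d_add_one_eq_of_adj h₂ (hm S₂ m.start_mem_support).2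
  obtain ⟨g, hgP, hg₂, hsep⟩ := exists_not_mem_between hne (by omega)
  have := R₀.hcd
  have := S₁.hcd
  have := S₂.hcd
  obtain ⟨ℓ, hℓ, hcross⟩ := exists_closed_gridWalk_crossingNumber_eq m hm (g := g)
    (α := max R₀.a S₂.a) (β := max R₀.a S₁.a) (by omega) (by omega)
    (by simp only [SlabPiece.mem_box]; omega) (by simp only [SlabPiece.mem_box]; omega)
  refine ⟨g, hgP, _, ℓ, hℓ, ?_⟩
  rw [hcross]
  simp only [rightOf]
  split_ifs <;> omega

theorem slabGraph_isAcyclic (hfin : P.Finite) (hholefree : Connected4 Pᶜ) :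
    (slabGraph P).IsAcyclic := by
  classical
  intro R c hc
  obtain ⟨R₀, hR₀, hmax⟩ := c.support.toFinset.exists_max_image SlabPiece.c ⟨R, by simp⟩
  rw [List.mem_toFinset] at hR₀
  obtain ⟨S₂, S₁, h₁, h₂, hne, m, hR₀m, hm⟩ := (hc.rotate hR₀).exists_walk_between_neighbors
  obtain ⟨g, hgP, u, ℓ, hℓ, hcross⟩ := exists_crossingNumber_ne_zero h₁ h₂ hne.symm m
    fun A hA => ⟨fun h => hR₀m (h ▸ hA), hmax A (by simpa using hm A hA)⟩
  exact hcross (crossingNumber_eq_zero_of_connected4_compl hfin hholefree ℓ hℓ hgP)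

end SlabGraph

/-- Let `P` be a hole-free polyomino (finite, 4-connected, with 4-connected
complement).  Then the adjacency graph of the rectangles of the horizontal slab
decomposition of `P` is a tree. -/
theorem slab_adjacency_graph_isTree (P : Set Pix) (hfin : P.Finite)
    (hconn : Connected4 P) (hholefree : Connected4 Pᶜ) :
    (SimpleGraph.fromRel (fun R R' : SlabPiece P => SlabAdj R R')).IsTree :=
  ⟨slabGraph_connected hfin hconn, slabGraph_isAcyclic hfin hholefree⟩
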